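/- arXiv:2603.08920 — 2 statements merged into one kernel-verified Lean document; each statement's English description precedes it below -/
import Mathlib

section
/- Let φ = f (the Killing lift) and τ = p + t for a surface in hyperbolic space inside ℝ^{4,2}, and for μ ∈ ℝ define σ⁺ := τ + φ and σ⁻ := ((μ+1)/2)τ + ((μ-1)/2)φ. Then in curvature line coordinates (u,v), using Rodrigues' equations t_u = -k₁f_u, t_v = -k₂f_v, the exterior product satisfies σ⁺_u ∧ σ⁻_v − σ⁺_v ∧ σ⁻_u = ((μ+1)K − 2μH + (μ−1))·(φ_u ∧ φ_v), where K = k₁k₂ and H = (k₁+k₂)/2. Consequently, f is linear Weingarten of Bryant type with parameter μ, i.e., (μ+1)K − 2μH + (μ−1) = 0, if and only if dσ⁺ ∧ dσ⁻ = 0. -/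
/-!
Rodrigues' equations make each partial derivative of `σ = a • (p + t) + b • f` a multiple of
the same partial derivative of `f`: `σ_u = (b - a k₁) f_u` and `σ_v = (b - a k₂) f_v`. Hence, by
bilinearity and antisymmetry of `∧`, `σ⁺_u ∧ σ⁻_v − σ⁺_v ∧ σ⁻_u` is a multiple of `f_u ∧ f_v`,
and with `a = b = 1` for `σ⁺` and `a = (μ+1)/2`, `b = (μ-1)/2` for `σ⁻` the factor is
`(μ+1)k₁k₂ − μ(k₁+k₂) + (μ−1)`.
-/

/-- The identification `Λ²V ≅ so(V)`: `(v∧w)(x) = (x,v)w − (w,x)v`. -/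
def wedgeMap {V : Type*} [AddCommGroup V] [Module ℝ V]
    (B : V →ₗ[ℝ] V →ₗ[ℝ] ℝ) (v w : V) : V → V :=
  fun x => B x v • w - B w x • v

section Wedge

variable {V : Type*} [AddCommGroup V] [Module ℝ V] (B : V →ₗ[ℝ] V →ₗ[ℝ] ℝ)

lemma wedgeMap_smul_smul (a b : ℝ) (v w x : V) :
    wedgeMap B (a • v) (b • w) x = (a * b) • wedgeMap B v w x := by
  simp only [wedgeMap, map_smul, LinearMap.smul_apply, smul_eq_mul, smul_smul]
  module

lemma wedgeMap_swap (hB : ∀ v w, B v w = B w v) (v w x : V) :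
    wedgeMap B w v x = -wedgeMap B v w x := by
  simp [wedgeMap, hB x w, hB v x]

lemma wedgeMap_smul_sub_wedgeMap_smul_swap (hB : ∀ v w, B v w = B w v)
    (a₁ a₂ b₁ b₂ : ℝ) (e₁ e₂ x : V) :
    wedgeMap B (a₁ • e₁) (b₂ • e₂) x - wedgeMap B (a₂ • e₂) (b₁ • e₁) x
      = (a₁ * b₂ + a₂ * b₁) • wedgeMap B e₁ e₂ x := by
  rw [wedgeMap_smul_smul, wedgeMap_smul_smul, wedgeMap_swap B hB e₁ e₂, smul_neg,
    sub_neg_eq_add, add_smul]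

end Wedge

section Rodrigues

variable {V : Type*} [NormedAddCommGroup V] [NormedSpace ℝ V]
  {f t σ : ℝ × ℝ → V} {p : V} {a b : ℝ}

lemma fderiv_eq_of_eq_smul_add_add_smul (hf : Differentiable ℝ f) (ht : Differentiable ℝ t)
    (hσ : ∀ x, σ x = a • (p + t x) + b • f x) (x : ℝ × ℝ) :
    fderiv ℝ σ x = a • fderiv ℝ t x + b • fderiv ℝ f x := by
  have hσ' : σ = fun y => a • p + (a • t y + b • f y) := by
    funext y
    rw [hσ y, smul_add, add_assoc]
  rw [hσ']
  exact ((((ht x).hasFDerivAt.const_smul a).add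
    ((hf x).hasFDerivAt.const_smul b)).const_add (a • p)).fderiv

lemma fderiv_apply_eq_smul_of_rodrigues (hf : Differentiable ℝ f) (ht : Differentiable ℝ t)
    (hσ : ∀ x, σ x = a • (p + t x) + b • f x) {x w : ℝ × ℝ} {k : ℝ}
    (hR : fderiv ℝ t x w = -k • fderiv ℝ f x w) :
    fderiv ℝ σ x w = (b - a * k) • fderiv ℝ f x w := by
  rw [fderiv_eq_of_eq_smul_add_add_smul hf ht hσ, add_apply, smul_apply, smul_apply, hR]
  module

end Rodrigues

theorem bryant_lw_characterization_general
    {V : Type*} [NormedAddCommGroup V] [NormedSpace ℝ V]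
    (B : V →ₗ[ℝ] V →ₗ[ℝ] ℝ) (hB : ∀ v w, B v w = B w v)
    (p : V)
    (f t : ℝ × ℝ → V) (hf : Differentiable ℝ f) (ht : Differentiable ℝ t)
    (k₁ k₂ : ℝ × ℝ → ℝ)
    (hRu : ∀ x, fderiv ℝ t x (1, 0) = -(k₁ x) • fderiv ℝ f x (1, 0))
    (hRv : ∀ x, fderiv ℝ t x (0, 1) = -(k₂ x) • fderiv ℝ f x (0, 1))
    (H K : ℝ × ℝ → ℝ)
    (hH : ∀ x, H x = (k₁ x + k₂ x) / 2) (hK : ∀ x, K x = k₁ x * k₂ x)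
    (μ : ℝ)
    (σp σm : ℝ × ℝ → V)
    (hσp : ∀ x, σp x = (p + t x) + f x)
    (hσm : ∀ x, σm x = ((μ + 1) / 2) • (p + t x) + ((μ - 1) / 2) • f x) :
    (∀ x v,
      wedgeMap B (fderiv ℝ σp x (1, 0)) (fderiv ℝ σm x (0, 1)) v
        - wedgeMap B (fderiv ℝ σp x (0, 1)) (fderiv ℝ σm x (1, 0)) v
      = ((μ + 1) * K x - 2 * μ * H x + (μ - 1))
          • wedgeMap B (fderiv ℝ f x (1, 0)) (fderiv ℝ f x (0, 1)) v) ∧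
    (∀ x, (∃ v, wedgeMap B (fderiv ℝ f x (1, 0)) (fderiv ℝ f x (0, 1)) v ≠ 0) →
      (((μ + 1) * K x - 2 * μ * H x + (μ - 1) = 0) ↔
        (∀ v, wedgeMap B (fderiv ℝ σp x (1, 0)) (fderiv ℝ σm x (0, 1)) v
          - wedgeMap B (fderiv ℝ σp x (0, 1)) (fderiv ℝ σm x (1, 0)) v = 0))) := by
  have hσp' : ∀ x, σp x = (1 : ℝ) • (p + t x) + (1 : ℝ) • f x := by simpa only [one_smul]
  have key : ∀ x v,
      wedgeMap B (fderiv ℝ σp x (1, 0)) (fderiv ℝ σm x (0, 1)) v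
        - wedgeMap B (fderiv ℝ σp x (0, 1)) (fderiv ℝ σm x (1, 0)) v
      = ((μ + 1) * K x - 2 * μ * H x + (μ - 1))
          • wedgeMap B (fderiv ℝ f x (1, 0)) (fderiv ℝ f x (0, 1)) v := by
    intro x v
    rw [fderiv_apply_eq_smul_of_rodrigues hf ht hσp' (hRu x),
      fderiv_apply_eq_smul_of_rodrigues hf ht hσp' (hRv x),
      fderiv_apply_eq_smul_of_rodrigues hf ht hσm (hRu x),
      fderiv_apply_eq_smul_of_rodrigues hf ht hσm (hRv x),
      wedgeMap_smul_sub_wedgeMap_smul_swap B hB, hH, hK]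
    congr 1
    ring
  refine ⟨key, fun x ⟨v₀, hv₀⟩ => ⟨fun hc v => by rw [key, hc, zero_smul], fun hall => ?_⟩⟩
  simpa [key, hv₀] using hall v₀

/-- with `φ = f`, `τ = p + t`, `σ⁺ = τ + φ`,
`σ⁻ = ((μ+1)/2)τ + ((μ−1)/2)φ`, in curvature line coordinates one has
`σ⁺_u ∧ σ⁻_v − σ⁺_v ∧ σ⁻_u = ((μ+1)K − 2μH + (μ−1))·(φ_u ∧ φ_v)`; consequently
(for an immersion) `f` is linear Weingarten of Bryant type with parameter `μ`
iff `dσ⁺ ∧ dσ⁻ = 0`. -/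
theorem bryant_lw_characterization
    {V : Type*} [NormedAddCommGroup V] [NormedSpace ℝ V]
    (B : V →ₗ[ℝ] V →ₗ[ℝ] ℝ) (hB : ∀ v w, B v w = B w v)
    (p q : V) (hpp : B p p = -1) (hqq : B q q = 1) (hpq : B p q = 0)
    (f t : ℝ × ℝ → V) (hf : Differentiable ℝ f) (ht : Differentiable ℝ t)
    (hff : ∀ x, B (f x) (f x) = 0) (hfp : ∀ x, B (f x) p = 0)
    (hfq : ∀ x, B (f x) q = -1)
    (htt : ∀ x, B (t x) (t x) = 1) (htp : ∀ x, B (t x) p = 0)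
    (htq : ∀ x, B (t x) q = 0) (htf : ∀ x, B (t x) (f x) = 0)
    (k₁ k₂ : ℝ × ℝ → ℝ)
    (hRu : ∀ x, fderiv ℝ t x (1, 0) = -(k₁ x) • fderiv ℝ f x (1, 0))
    (hRv : ∀ x, fderiv ℝ t x (0, 1) = -(k₂ x) • fderiv ℝ f x (0, 1))
    (hperp : ∀ x, B (fderiv ℝ f x (1, 0)) (fderiv ℝ f x (0, 1)) = 0)
    (H K : ℝ × ℝ → ℝ)
    (hH : ∀ x, H x = (k₁ x + k₂ x) / 2) (hK : ∀ x, K x = k₁ x * k₂ x)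
    (μ : ℝ)
    (σp σm : ℝ × ℝ → V)
    (hσp : ∀ x, σp x = (p + t x) + f x)
    (hσm : ∀ x, σm x = ((μ + 1) / 2) • (p + t x) + ((μ - 1) / 2) • f x) :
    (∀ x v,
      wedgeMap B (fderiv ℝ σp x (1, 0)) (fderiv ℝ σm x (0, 1)) v
        - wedgeMap B (fderiv ℝ σp x (0, 1)) (fderiv ℝ σm x (1, 0)) v
      = ((μ + 1) * K x - 2 * μ * H x + (μ - 1))
          • wedgeMap B (fderiv ℝ f x (1, 0)) (fderiv ℝ f x (0, 1)) v) ∧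
    (∀ x, (∃ v, wedgeMap B (fderiv ℝ f x (1, 0)) (fderiv ℝ f x (0, 1)) v ≠ 0) →
      (((μ + 1) * K x - 2 * μ * H x + (μ - 1) = 0) ↔
        (∀ v, wedgeMap B (fderiv ℝ σp x (1, 0)) (fderiv ℝ σm x (0, 1)) v
          - wedgeMap B (fderiv ℝ σp x (0, 1)) (fderiv ℝ σm x (1, 0)) v = 0))) :=
  bryant_lw_characterization_general B hB p f t hf ht k₁ k₂ hRu hRv H K hH hK μ σp σm hσp hσm
end

section
/- The centre surface of the horosphere congruence in Poincaré half space: given f : Σ² → K³ ⊂ ℝ^{4,1} a surface with tangent plane map t, write s := t + f = h − q with h := q + f + t; if (s,∞) ≠ 0 so that s = (1/r)(o + c + (((c,c) − r²)/2)∞) for centre c and radius r, and ⟨h⟩ = ⟨o + 𝔥 + ((𝔥,𝔥)/2)∞⟩ for 𝔥 : Σ² → ℂ = q^⊥ ∩ ℝ³, then the centre surface is c = 𝔥 − r·q. -/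
open scoped RealInnerProductSpace

/-- the centre surface of the horosphere congruence in Poincaré
half space: for a surface `f` in `K³` with tangent plane map `t`, write
`s = t + f = h − q` with `h = q + f + t`; if `s` has Euclidean centre
`c = cq·q + c₂` and radius `r`, and `⟨h⟩` is the isotropic lift of
`𝔥 : Σ² → ℂ = q^⊥ ∩ ℝ³`, then `c = 𝔥 − r·q`, i.e. `c₂ = 𝔥` and `cq = −r`. -/
theorem centre_surface_of_horosphere_congruence
    {V : Type*} [NormedAddCommGroup V] [NormedSpace ℝ V]
    {E : Type*} [NormedAddCommGroup E] [NormedSpace ℝ E]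
    (B : V →ₗ[ℝ] V →ₗ[ℝ] ℝ) (hB : ∀ v w, B v w = B w v)
    (o q inf : V)
    (hoo : B o o = 0) (hii : B inf inf = 0) (hoi : B o inf = -1)
    (hqq : B q q = 1) (hqo : B q o = 0) (hqi : B q inf = 0)
    (j : EuclideanSpace ℝ (Fin 2) →ₗ[ℝ] V)
    (hj : ∀ x y, B (j x) (j y) = ⟪x, y⟫)
    (hjo : ∀ x, B (j x) o = 0) (hji : ∀ x, B (j x) inf = 0)
    (hjq : ∀ x, B (j x) q = 0)
    -- the surface in hyperbolic space and its tangent plane map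
    (f t : E → V) (hf : Differentiable ℝ f)
    (hff : ∀ p, B (f p) (f p) = 0) (hfq : ∀ p, B (f p) q = -1)
    (htt : ∀ p, B (t p) (t p) = 1) (htq : ∀ p, B (t p) q = 0)
    (hft : ∀ p, B (f p) (t p) = 0)
    (hdft : ∀ p (X : E), B (fderiv ℝ f p X) (t p) = 0)
    -- the horosphere congruence `s = t + f` and hyperbolic Gauss map `h = q + f + t`
    (s h : E → V)
    (hs : ∀ p, s p = t p + f p) (hh : ∀ p, h p = q + f p + t p)
    (hsinf : ∀ p, B (s p) inf ≠ 0)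
    -- Euclidean sphere form of `s`: centre `cq·q + c₂`, radius `r`
    (cq : E → ℝ) (c₂ : E → EuclideanSpace ℝ (Fin 2)) (r : E → ℝ)
    (hrne : ∀ p, r p ≠ 0)
    (hsph : ∀ p, s p = (r p)⁻¹ •
      (o + (cq p • q + j (c₂ p))
        + (((cq p) ^ 2 + ⟪c₂ p, c₂ p⟫ - (r p) ^ 2) / 2) • inf))
    -- `⟨h⟩` is the isotropic lift of a boundary point `𝔥 ∈ ℂ`
    (𝔥 : E → EuclideanSpace ℝ (Fin 2))
    (hlift : ∀ p, ∃ lam : ℝ, lam ≠ 0 ∧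
      h p = lam • (o + j (𝔥 p) + (⟪𝔥 p, 𝔥 p⟫ / 2) • inf)) :
    ∀ p, c₂ p = 𝔥 p ∧ cq p = -(r p) := by
  intro p
  obtain ⟨lam, hlam0, hl⟩ := hlift p
  have hhs : h p = q + s p := by rw [hh p, hs p]; abel
  have hoq : B o q = 0 := by rw [hB]; exact hqo
  have hiq : B inf q = 0 := by rw [hB]; exact hqi
  have hoj : ∀ x, B o (j x) = 0 := fun x => by rw [hB]; exact hjo x
  have hij : ∀ x, B inf (j x) = 0 := fun x => by rw [hB]; exact hji x
  have hqj : ∀ x, B q (j x) = 0 := fun x => by rw [hB]; exact hjq x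
  have key : ∀ v : V, lam * (B o v + B (j (𝔥 p)) v + (⟪𝔥 p, 𝔥 p⟫/2) * B inf v)
      = B q v + (r p)⁻¹ * (B o v + (cq p * B q v + B (j (c₂ p)) v)
        + (((cq p)^2 + ⟪c₂ p, c₂ p⟫ - (r p)^2)/2) * B inf v) := by
    intro v
    have h1 := congrArg (fun x => B x v) hl
    rw [hhs, hsph p] at h1
    simp only [map_add, map_smul, LinearMap.add_apply, LinearMap.smul_apply,
      smul_eq_mul, mul_add] at h1
    linarith [h1]
  have hinf := key inf
  simp only [hii, hoi, hji, hqi, mul_zero, zero_mul, add_zero, zero_add,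
    mul_neg_one, neg_add_rev, mul_neg] at hinf
  have hlr : lam = (r p)⁻¹ := by linarith
  have hq := key q
  simp only [hoq, hiq, hjq, hqq, mul_zero, zero_mul, add_zero, zero_add,
    mul_one] at hq
  have hcq : cq p = -(r p) := by
    have h2 : r p * ((r p)⁻¹ * cq p) = r p * (-1) := by
      have h2' : (r p)⁻¹ * cq p = -1 := by linarith
      rw [h2']
    rw [← mul_assoc, mul_inv_cancel₀ (hrne p), one_mul] at h2
    linarith
  refine ⟨?_, hcq⟩
  have hjx : ∀ x, ⟪𝔥 p, x⟫ = ⟪c₂ p, x⟫ := by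
    intro x
    have h3 := key (j x)
    simp only [hoj, hij, hqj, hj, mul_zero, zero_mul, add_zero, zero_add] at h3
    rw [hlr] at h3
    exact mul_left_cancel₀ (inv_ne_zero (hrne p)) h3
  have h1 := hjx (c₂ p - 𝔥 p)
  have h4 : ⟪c₂ p - 𝔥 p, c₂ p - 𝔥 p⟫ = 0 := by
    rw [inner_sub_left]; linarith [h1]
  have h5 := inner_self_eq_zero.mp h4
  rwa [sub_eq_zero] at h5
end
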